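/- arXiv:1408.0034 — 3 statements merged into one kernel-verified Lean document; each statement's English description precedes it below -/
import Mathlib

section
/- Let n ≥ 2, let ω be a real number such that sin(ωj) ≠ 0 for every integer j with 1 ≤ j ≤ n−1, and let x, x' ∈ ℂ^n (indexed by 0,…,n−1) with x_0 ≠ 0. Suppose that (i) |x_j| = |x'_j| for every 0 ≤ j ≤ n−1, (ii) |x_0 + x_j| = |x'_0 + x'_j| for every 1 ≤ j ≤ n−1, and (iii) |x_0 + e^{iωj} x_j| = |x'_0 + e^{iωj} x'_j| for every 1 ≤ j ≤ n−1. Then there exists a real number θ such that x'_j = e^{iθ} x_j for every j; i.e., these 3n−2 intensity measurements determine x uniquely up to a global phase. -/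
/-!
Normalise the global phase so that `x'₀ = x₀`. For `j ≥ 1` put `a = x_j`, `b = x'_j`,
`u = x₀`: equal moduli `|a| = |b|` turn `|u + a| = |u + b|` into `Re (ū (a - b)) = 0`, and the
modulated measurement gives `Re (e ū (a - b)) = 0` with `e = e^{iωj}`. As `Im e = sin (ωj) ≠ 0`,
the two real-linear conditions force `ū (a - b) = 0`, hence `a = b`.
-/

open Complex ComplexConjugate

namespace Complex

theorem exists_eq_exp_I_mul_of_norm_eq {u v : ℂ} (h : ‖u‖ = ‖v‖) :
    ∃ θ : ℝ, v = exp (I * θ) * u := by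
  refine ⟨v.arg - u.arg, ?_⟩
  calc v = ‖v‖ * exp (v.arg * I) := (norm_mul_exp_arg_mul_I v).symm
    _ = exp (I * ↑(v.arg - u.arg)) * (‖u‖ * exp (u.arg * I)) := by
      rw [h, mul_left_comm, ← exp_add]
      congr 2
      push_cast
      ring
    _ = exp (I * ↑(v.arg - u.arg)) * u := by rw [norm_mul_exp_arg_mul_I]

theorem re_conj_mul_sub_eq_zero_of_norm_add_eq {u a b : ℂ} (hab : ‖a‖ = ‖b‖)
    (h : ‖u + a‖ = ‖u + b‖) : (conj u * (a - b)).re = 0 := by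
  have hsq : normSq a = normSq b := by rw [← Complex.sq_norm, ← Complex.sq_norm, hab]
  have hsum : normSq (u + a) = normSq (u + b) := by rw [← Complex.sq_norm, ← Complex.sq_norm, h]
  rw [normSq_add, normSq_add, hsq] at hsum
  have hre : (conj u * a).re = (conj u * b).re := by
    rw [← conj_re, ← conj_re (conj u * b)]
    simpa [mul_comm] using hsum
  rw [mul_sub, sub_re, hre, sub_self]

theorem eq_zero_of_re_eq_zero_of_re_mul_eq_zero {e w : ℂ} (he : e.im ≠ 0) (hw : w.re = 0)
    (hew : (e * w).re = 0) : w = 0 := by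
  rw [mul_re, hw, mul_zero, zero_sub, neg_eq_zero] at hew
  exact Complex.ext hw ((mul_eq_zero.mp hew).resolve_left he)

theorem eq_of_norm_add_eq_of_norm_add_mul_eq {u a b e : ℂ} (hu : u ≠ 0) (he : e.im ≠ 0)
    (hab : ‖a‖ = ‖b‖) (h : ‖u + a‖ = ‖u + b‖) (he' : ‖u + e * a‖ = ‖u + e * b‖) : a = b := by
  have hw : (conj u * (a - b)).re = 0 := re_conj_mul_sub_eq_zero_of_norm_add_eq hab h
  have hew : (e * (conj u * (a - b))).re = 0 := by
    have := re_conj_mul_sub_eq_zero_of_norm_add_eq (by rw [norm_mul, norm_mul, hab]) he'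
    rwa [← mul_sub, mul_left_comm] at this
  have := eq_zero_of_re_eq_zero_of_re_mul_eq_zero he hw hew
  rw [mul_eq_zero, map_eq_zero] at this
  exact sub_eq_zero.mp (this.resolve_left hu)

end Complex

/-- Phase retrieval of a non-sparse signal from the `3n-2` deterministic measurements
`|x_j|`, `|x_0 + x_j|`, `|x_0 + e^{iωj} x_j|`: the signal is determined up to a
global phase. -/
theorem stmt0 (n : ℕ) (hn : 2 ≤ n) (ω : ℝ)
    (hω : ∀ j : ℕ, 1 ≤ j → j ≤ n - 1 → Real.sin (ω * j) ≠ 0)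
    (x x' : Fin n → ℂ)
    (hx0 : x ⟨0, by omega⟩ ≠ 0)
    (h1 : ∀ j : Fin n, ‖x j‖ = ‖x' j‖)
    (h2 : ∀ j : Fin n, 1 ≤ (j : ℕ) →
      ‖x ⟨0, by omega⟩ + x j‖ = ‖x' ⟨0, by omega⟩ + x' j‖)
    (h3 : ∀ j : Fin n, 1 ≤ (j : ℕ) →
      ‖x ⟨0, by omega⟩ + Complex.exp (Complex.I * ((ω * (j : ℕ) : ℝ) : ℂ)) * x j‖
        = ‖x' ⟨0, by omega⟩ + Complex.exp (Complex.I * ((ω * (j : ℕ) : ℝ) : ℂ)) * x' j‖) :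
    ∃ θ : ℝ, ∀ j : Fin n, x' j = Complex.exp (Complex.I * θ) * x j := by
  set i₀ : Fin n := ⟨0, by omega⟩
  obtain ⟨θ, hθ⟩ := exists_eq_exp_I_mul_of_norm_eq (h1 i₀)
  set c := exp (I * θ)
  have hc : ‖c‖ = 1 := norm_exp_I_mul_ofReal θ
  have hx'0 : x' i₀ ≠ 0 := by rwa [← norm_ne_zero_iff, ← h1, norm_ne_zero_iff]
  refine ⟨θ, fun j => ?_⟩
  rcases Nat.eq_zero_or_pos j with hj | hj
  · rwa [show j = i₀ from Fin.ext hj]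
  have he : (exp (I * ((ω * (j : ℕ) : ℝ) : ℂ))).im ≠ 0 := by
    rw [mul_comm, exp_ofReal_mul_I_im]
    exact hω j hj (by omega)
  -- `c • x` has the measurements of `x` and agrees with `x'` at `i₀`
  have hmeas (z : ℂ) : ‖x' i₀ + z * (c * x j)‖ = ‖x i₀ + z * x j‖ := by
    rw [hθ, show c * x i₀ + z * (c * x j) = c * (x i₀ + z * x j) by ring, norm_mul, hc, one_mul]
  refine (eq_of_norm_add_eq_of_norm_add_mul_eq hx'0 he ?_ ?_ ?_).symm
  · rw [norm_mul, hc, one_mul, h1]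
  · simpa [h2 j hj] using hmeas 1
  · rw [hmeas, h3 j hj]
end

section
/- Let ω be a real number with sin ω ≠ 0, and let u, v, u', v' ∈ ℂ with u ≠ 0. If |u| = |u'|, |v| = |v'|, |u + v| = |u' + v'|, and |u + e^{iω} v| = |u' + e^{iω} v'|, then there exists a real number θ such that u' = e^{iθ} u and v' = e^{iθ} v. -/
/-!
By polarization, `|u|`, `|v|` and `|u + v|` determine `Re (u * conj v)`, and `|u + e^{iω} v|`
determines `Re (u * conj v * e^{-iω}) = cos ω · Re (u * conj v) + sin ω · Im (u * conj v)`; when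
`sin ω ≠ 0` the two together determine `u * conj v`. Since `|u| = |u'|`, `u' = c u` for a unit `c`,
and then `u * conj v = u' * conj v'` forces `v' = c v`.
-/

open Complex ComplexConjugate

theorem Complex.re_mul_conj_eq_of_norm_add_eq {u v u' v' : ℂ} (hu : ‖u‖ = ‖u'‖)
    (hv : ‖v‖ = ‖v'‖) (h : ‖u + v‖ = ‖u' + v'‖) : (u * conj v).re = (u' * conj v').re := by
  have hsq := congrArg (· ^ 2) h
  simp only [← normSq_eq_norm_sq, normSq_add] at hsq
  rw [normSq_eq_norm_sq u, normSq_eq_norm_sq u', normSq_eq_norm_sq v, normSq_eq_norm_sq v', hu,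
    hv] at hsq
  linarith

theorem Complex.eq_of_re_eq_of_re_mul_conj_eq {z z' m : ℂ} (hm : m.im ≠ 0) (hre : z.re = z'.re)
    (hrot : (z * conj m).re = (z' * conj m).re) : z = z' := by
  simp only [mul_re, conj_re, conj_im, hre] at hrot
  exact Complex.ext hre (mul_right_cancel₀ hm (by linarith))

theorem Complex.exists_phase_of_mul_conj_eq {u v u' v' : ℂ} (hu : u ≠ 0) (hnorm : ‖u‖ = ‖u'‖)
    (h : u * conj v = u' * conj v') :
    ∃ θ : ℝ, u' = exp (I * θ) * u ∧ v' = exp (I * θ) * v := by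
  obtain ⟨θ, hθ⟩ := (norm_eq_one_iff (u' / u)).mp (by
    rw [norm_div, ← hnorm, div_self (norm_ne_zero_iff.mpr hu)])
  set c := exp (I * θ)
  have hc : c = u' / u := by rw [← hθ, mul_comm]
  have hcu : u' = c * u := by rw [hc, div_mul_cancel₀ _ hu]
  have hcc : conj c * c = 1 := by
    rw [mul_comm, mul_conj, normSq_eq_norm_sq, hc, norm_div, ← hnorm,
      div_self (norm_ne_zero_iff.mpr hu)]
    norm_num
  have hv : conj v = c * conj v' := by
    apply mul_left_cancel₀ hu
    rw [h, hcu]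
    ring
  refine ⟨θ, hcu, ?_⟩
  calc v' = conj (conj c * c * conj v') := by rw [hcc, one_mul, conj_conj]
    _ = c * v := by rw [mul_assoc, ← hv, ← map_mul, conj_conj]

/-- Two-component phase recovery: the magnitudes `|u|, |v|, |u+v|` together with the
rotated measurement `|u + e^{iω} v|` (with `sin ω ≠ 0`, `u ≠ 0`) determine the pair
`(u,v)` up to a common global phase. -/
theorem stmt1 (ω : ℝ) (hω : Real.sin ω ≠ 0) (u v u' v' : ℂ) (hu : u ≠ 0)
    (h1 : ‖u‖ = ‖u'‖)
    (h2 : ‖v‖ = ‖v'‖)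
    (h3 : ‖u + v‖ = ‖u' + v'‖)
    (h4 : ‖u + Complex.exp (Complex.I * ω) * v‖
        = ‖u' + Complex.exp (Complex.I * ω) * v'‖) :
    ∃ θ : ℝ, u' = Complex.exp (Complex.I * θ) * u ∧ v' = Complex.exp (Complex.I * θ) * v := by
  have hm_im : (exp (I * ω)).im ≠ 0 := by rwa [mul_comm, exp_ofReal_mul_I_im]
  have hm_norm : ‖exp (I * ω)‖ = 1 := by rw [mul_comm, norm_exp_ofReal_mul_I]
  have hre := re_mul_conj_eq_of_norm_add_eq h1 h2 h3
  have hrot := re_mul_conj_eq_of_norm_add_eq h1 (by rw [norm_mul, norm_mul, hm_norm, h2]) h4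
  have hrot' : (u * conj v * conj (exp (I * ω))).re = (u' * conj v' * conj (exp (I * ω))).re := by
    simpa only [map_mul, mul_right_comm _ (conj (exp (I * ω))), ← mul_assoc] using hrot
  exact exists_phase_of_mul_conj_eq hu h1 (eq_of_re_eq_of_re_mul_conj_eq hm_im hre hrot')
end

section
/- Let d ≥ 3 be an integer and λ > 0 a real number satisfying (d−1)·λ·e^{−λ} > 1, and define f(t) = (1 + e^{−λ} − e^{−λt})^{d−1}. Then the equation f(t) = t has exactly two solutions in [0,1]: the point t = 1 and a unique point t* ∈ (0,1). Moreover, f(t) < t for all t ∈ (t*, 1). -/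
/-!
Write `f(t) = b(t)^n` with `b(t) = 1 + e^{-λ} - e^{-λt}` and `n = d - 1`. On `[0, ∞)` the
logarithm of `f'(t) = n λ e^{-λt} b(t)^{n-1}` is a linear function plus a multiple of `log b`,
hence concave, because `b` is concave and positive. Since `f'(1) = n λ e^{-λ} > 1`, concavity
shows that once `f' ≥ 1` at some point of `[0, 1)`, it stays above `1` up to `1`; so from that
point on `f(t) - t` increases strictly to its zero at `1`. By Darboux such a point exists, and
`f(0) > 0` then leaves exactly one further crossing `t*`, with `f < id` on `(t*, 1)`.
-/

open Real Set

theorem ConcaveOn.log {E : Type*} [AddCommGroup E] [Module ℝ E] {s : Set E} {g : E → ℝ}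
    (hg : ConcaveOn ℝ s g) (hpos : ∀ x ∈ s, 0 < g x) : ConcaveOn ℝ s fun x => log (g x) :=
  ⟨hg.1, fun x hx y hy _ _ ha hb hab =>
    (strictConcaveOn_log_Ioi.concaveOn.2 (hpos x hx) (hpos y hy) ha hb hab).trans
      (log_le_log (convex_Ioi (0 : ℝ) (hpos x hx) (hpos y hy) ha hb hab) (hg.2 hx hy ha hb hab))⟩

section FixedPoints

variable {f f' : ℝ → ℝ}

theorem lt_self_of_one_le_deriv (hf : ∀ t, HasDerivAt f (f' t) t)
    (hf' : ∀ s t, 0 ≤ s → s < t → t ≤ 1 → 1 ≤ f' s → 1 < f' t) (hf1 : f 1 = 1)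
    {c : ℝ} (hc : 0 ≤ c) (hc1 : 1 ≤ f' c) : ∀ t ∈ Ico c 1, f t < t := by
  have hmono : StrictMonoOn (fun t => f t - t) (Icc c 1) := by
    refine strictMonoOn_of_hasDerivWithinAt_pos (convex_Icc c 1)
      (fun t _ => ((hf t).sub (hasDerivAt_id t)).continuousAt.continuousWithinAt)
      (fun t _ => ((hf t).sub (hasDerivAt_id t)).hasDerivWithinAt) fun t ht => ?_
    rw [interior_Icc] at ht
    exact sub_pos.2 (hf' c t hc ht.1 ht.2.le hc1)
  intro t ht
  have := hmono ⟨ht.1, ht.2.le⟩ ⟨ht.1.trans ht.2.le, le_rfl⟩ ht.2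
  simp only [hf1, sub_self] at this
  linarith

theorem lt_self_of_isFixedPt_of_lt (hf : ∀ t, HasDerivAt f (f' t) t)
    (hf' : ∀ s t, 0 ≤ s → s < t → t ≤ 1 → 1 ≤ f' s → 1 < f' t) (hf1 : f 1 = 1)
    {s t : ℝ} (hs : 0 ≤ s) (hfs : Function.IsFixedPt f s) (hst : s < t) (ht : t < 1) :
    f t < t := by
  by_contra! hft
  obtain ⟨c, hc, hc'⟩ := exists_hasDerivAt_eq_slope f f' hst
    (fun x _ => (hf x).continuousAt.continuousWithinAt) fun x _ => hf x
  have hc1 : 1 ≤ f' c := by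
    rw [hc', le_div_iff₀ (sub_pos.2 hst), one_mul, hfs.eq]
    linarith
  exact (lt_self_of_one_le_deriv hf hf' hf1 (hs.trans hc.1.le) hc1 t ⟨hc.2.le, ht⟩).not_ge hft

theorem exists_one_le_deriv (hf : ∀ t, HasDerivAt f (f' t) t) (hf'1 : 1 < f' 1) :
    ∃ c ∈ Ico (0 : ℝ) 1, 1 ≤ f' c := by
  by_cases h0 : 1 ≤ f' 0
  · exact ⟨0, ⟨le_rfl, one_pos⟩, h0⟩
  · obtain ⟨c, hc, hc1⟩ := exists_hasDerivWithinAt_eq_of_gt_of_lt zero_le_one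
      (fun t _ => (hf t).hasDerivWithinAt) (not_le.1 h0) hf'1
    exact ⟨c, Ioo_subset_Ico_self hc, hc1.ge⟩

theorem exists_unique_interior_fixedPoint (hf : ∀ t, HasDerivAt f (f' t) t)
    (hf' : ∀ s t, 0 ≤ s → s < t → t ≤ 1 → 1 ≤ f' s → 1 < f' t)
    (hf0 : 0 < f 0) (hf1 : f 1 = 1) (hf'1 : 1 < f' 1) :
    ∃ tstar ∈ Ioo (0 : ℝ) 1, (∀ t ∈ Icc (0 : ℝ) 1, f t = t ↔ t = tstar ∨ t = 1) ∧
      ∀ t ∈ Ioo tstar 1, f t < t := by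
  obtain ⟨c, hc, hc1⟩ := exists_one_le_deriv hf hf'1
  have hfc : f c - c < 0 :=
    sub_neg.2 (lt_self_of_one_le_deriv hf hf' hf1 hc.1 hc1 c ⟨le_rfl, hc.2⟩)
  obtain ⟨tstar, hts, hfts⟩ := intermediate_value_Ioo' hc.1
    (fun x _ => ((hf x).sub (hasDerivAt_id x)).continuousAt.continuousWithinAt)
    ⟨hfc, by simpa using hf0⟩
  have hfix : Function.IsFixedPt f tstar := sub_eq_zero.1 hfts
  have hts1 : tstar < 1 := hts.2.trans hc.2
  refine ⟨tstar, ⟨hts.1, hts1⟩, fun t ht => ⟨fun hft => ?_, ?_⟩,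
    fun t ht => lt_self_of_isFixedPt_of_lt hf hf' hf1 hts.1.le hfix ht.1 ht.2⟩
  · rcases ht.2.eq_or_lt with rfl | ht1
    · exact Or.inr rfl
    rcases lt_trichotomy t tstar with htlt | rfl | hgt
    · exact absurd hfix.eq (lt_self_of_isFixedPt_of_lt hf hf' hf1 ht.1 hft htlt hts1).ne
    · exact Or.inl rfl
    · exact absurd hft (lt_self_of_isFixedPt_of_lt hf hf' hf1 hts.1.le hfix hgt ht1).ne
  · rintro (rfl | rfl)
    exacts [hfix.eq, hf1]

end FixedPoints

namespace PhaseCode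

noncomputable def base (lam t : ℝ) : ℝ := 1 + exp (-lam) - exp (-lam * t)

noncomputable def deMap (n : ℕ) (lam t : ℝ) : ℝ := base lam t ^ n

noncomputable def deMapDeriv (n : ℕ) (lam t : ℝ) : ℝ :=
  n * base lam t ^ (n - 1) * (lam * exp (-lam * t))

variable {n : ℕ} {lam : ℝ}

theorem base_pos (hlam : 0 ≤ lam) {t : ℝ} (ht : 0 ≤ t) : 0 < base lam t := by
  have : exp (-lam * t) ≤ 1 := exp_le_one_iff.2 (by nlinarith)
  have := exp_pos (-lam)
  unfold base
  linarith

theorem base_one : base lam 1 = 1 := by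
  simp [base]

theorem hasDerivAt_base (t : ℝ) : HasDerivAt (base lam) (lam * exp (-lam * t)) t :=
  (((hasDerivAt_id' t).const_mul (-lam)).exp.const_sub (1 + exp (-lam))).congr_deriv (by ring)

theorem hasDerivAt_deMap (t : ℝ) : HasDerivAt (deMap n lam) (deMapDeriv n lam t) t :=
  (hasDerivAt_base t).pow n

theorem concaveOn_base : ConcaveOn ℝ univ (base lam) := by
  have hexp : ConvexOn ℝ univ fun t => exp (-lam * t) :=
    convexOn_exp.comp_linearMap (LinearMap.mul ℝ ℝ (-lam))
  exact (concaveOn_const (1 + exp (-lam)) convex_univ).sub hexp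

theorem log_deMapDeriv (hn : 0 < n) (hlam : 0 < lam) {t : ℝ} (ht : 0 ≤ t) :
    log (deMapDeriv n lam t) = log (n * lam) + (n - 1 : ℕ) * log (base lam t) - lam * t := by
  have := base_pos hlam.le ht
  rw [deMapDeriv, log_mul (by positivity) (by positivity), log_mul (by positivity) (by positivity),
    log_mul (by positivity) (by positivity), log_pow, log_exp, log_mul (by positivity) hlam.ne']
  ring

theorem concaveOn_log_deMapDeriv (hn : 0 < n) (hlam : 0 < lam) :
    ConcaveOn ℝ (Ici 0) fun t => log (deMapDeriv n lam t) := by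
  have hlog := (concaveOn_base.subset (subset_univ _) (convex_Ici 0)).log
    fun t ht => base_pos hlam.le ht
  refine (((hlog.smul (Nat.cast_nonneg (n - 1))).add
    ((LinearMap.mul ℝ ℝ (-lam)).concaveOn (convex_Ici 0))).add_const (log (n * lam))).congr
    fun t ht => ?_
  simp only [Pi.add_apply, smul_eq_mul, LinearMap.mul_apply']
  rw [log_deMapDeriv hn hlam ht]
  ring

theorem one_lt_deMapDeriv (hn : 0 < n) (hlam : 0 < lam) (h1 : 1 < deMapDeriv n lam 1)
    {s t : ℝ} (hs : 0 ≤ s) (hst : s < t) (ht : t ≤ 1) (hs1 : 1 ≤ deMapDeriv n lam s) :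
    1 < deMapDeriv n lam t := by
  have hpos : 0 < deMapDeriv n lam t := by
    have := base_pos hlam.le (hs.trans hst.le)
    unfold deMapDeriv; positivity
  rw [← log_pos_iff hpos.le]
  by_contra! hlog
  -- concavity: a value at `t` not above the one at `s` bounds the one at `1`
  have hle := (concaveOn_log_deMapDeriv hn hlam).right_le_of_le_left'' hs
    (hs.trans (hst.le.trans ht)) hst ht (hlog.trans (log_nonneg hs1))
  linarith [log_pos h1]

end PhaseCode

/-- The density-evolution map `f(t) = (1 + e^{-λ} - e^{-λt})^{d-1}` has exactly two
fixed points in `[0,1]`: `t = 1` and a unique `t* ∈ (0,1)`, and `f(t) < t` on `(t*, 1)`. -/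
theorem stmt3 (d : ℕ) (hd : 3 ≤ d) (lam : ℝ) (hlam : 0 < lam)
    (hcond : ((d : ℝ) - 1) * lam * Real.exp (-lam) > 1) :
    ∃ tstar : ℝ, tstar ∈ Set.Ioo (0 : ℝ) 1 ∧
      (∀ t ∈ Set.Icc (0 : ℝ) 1,
        ((1 + Real.exp (-lam) - Real.exp (-lam * t)) ^ (d - 1) = t ↔ (t = tstar ∨ t = 1))) ∧
      (∀ t ∈ Set.Ioo tstar 1, (1 + Real.exp (-lam) - Real.exp (-lam * t)) ^ (d - 1) < t) := by
  have hn : 0 < d - 1 := by omega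
  have hderiv1 : 1 < PhaseCode.deMapDeriv (d - 1) lam 1 := by
    rw [PhaseCode.deMapDeriv, PhaseCode.base_one, one_pow, mul_one, Nat.cast_sub (by omega),
      Nat.cast_one, mul_one, ← mul_assoc]
    exact hcond
  exact exists_unique_interior_fixedPoint (f := PhaseCode.deMap (d - 1) lam)
    PhaseCode.hasDerivAt_deMap
    (fun s t hs hst ht => PhaseCode.one_lt_deMapDeriv hn hlam hderiv1 hs hst ht)
    (pow_pos (PhaseCode.base_pos hlam.le le_rfl) _)
    (by simp only [PhaseCode.deMap, PhaseCode.base_one, one_pow]) hderiv1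
end
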